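/- arXiv:2003.12639 — 5 statements merged into one kernel-verified Lean document; each statement's English description precedes it below -/
import Mathlib

section
/- A permutation σ of [n] is Baxter if and only if its inverse σ^{-1} is Baxter. -/
/-- A permutation σ of [n] is Baxter if there are no indices i < j < k such that
σ(j+1) < σ(i) < σ(k) < σ(j) or σ(j) < σ(k) < σ(i) < σ(j+1). -/
def IsBaxter {n : ℕ} (σ : Equiv.Perm (Fin n)) : Prop :=
  ¬ ∃ i j jp k : Fin n, i < j ∧ j < k ∧ (jp : ℕ) = (j : ℕ) + 1 ∧
      ((σ jp < σ i ∧ σ i < σ k ∧ σ k < σ j) ∨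
        (σ j < σ k ∧ σ k < σ i ∧ σ i < σ jp))

/-!
Inverting swaps positions and values. If `σ⁻¹` contains the vincular pattern 3-14-2 (or 2-41-3)
with its adjacent entries at positions `b, b + 1`, then in `σ` the values `b, b + 1` sit at
positions `p < s`, and between these `σ` moves from one side of the gap `{b, b + 1}` to the other.
As `b` and `b + 1` are taken only at `p` and `s`, some adjacent pair `t, t + 1` jumps over the
whole gap, and `p, t, t + 1, s` is an occurrence in `σ` of the other pattern.
-/

open OrderDual Function

theorem Nat.exists_flip_of_le {P : ℕ → Prop} {q r : ℕ} (hqr : q ≤ r) (hq : P q) (hr : ¬ P r) :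
    ∃ t, q ≤ t ∧ t < r ∧ P t ∧ ¬ P (t + 1) := by
  induction r, hqr using Nat.le_induction with
  | base => exact absurd hq hr
  | succ r hqr ih =>
    by_cases h : P r
    · exact ⟨r, hqr, r.lt_succ_self, h, hr⟩
    · obtain ⟨t, hqt, htr, ht, ht'⟩ := ih h
      exact ⟨t, hqt, htr.trans r.lt_succ_self, ht, ht'⟩

theorem Fin.exists_flip_of_le {n : ℕ} {P : Fin n → Prop} {q r : Fin n} (hqr : q ≤ r) (hq : P q)
    (hr : ¬ P r) : ∃ t t' : Fin n, (t' : ℕ) = t + 1 ∧ q ≤ t ∧ t' ≤ r ∧ P t ∧ ¬ P t' := by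
  obtain ⟨t, hqt, htr, ht, ht'⟩ := Nat.exists_flip_of_le (P := fun k => ∀ h : k < n, P ⟨k, h⟩)
    hqr (fun _ => hq) (fun h => hr (h r.isLt))
  have htn : t + 1 < n := Nat.lt_of_le_of_lt htr r.isLt
  exact ⟨⟨t, t.lt_succ_self.trans htn⟩, ⟨t + 1, htn⟩, rfl, hqt, htr, ht _, fun h => ht' fun _ => h⟩

variable {α : Type*} [LinearOrder α] {n : ℕ}

/-- The vincular pattern 3-14-2; for `toDual ∘ f` it is the pattern 2-41-3 of `f`. -/
def Contains3_14_2 (f : Fin n → α) : Prop :=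
  ∃ i j jp k : Fin n, i < j ∧ j < k ∧ (jp : ℕ) = j + 1 ∧ f j < f k ∧ f k < f i ∧ f i < f jp

theorem isBaxter_iff (σ : Equiv.Perm (Fin n)) :
    IsBaxter σ ↔ ¬ Contains3_14_2 σ ∧ ¬ Contains3_14_2 (toDual ∘ σ) := by
  simp only [IsBaxter, Contains3_14_2, comp_apply, toDual_lt_toDual, ← not_or, ← exists_or,
    ← and_or_left]
  exact not_congr <| exists₄_congr fun _ _ _ _ => by tauto

theorem contains3_14_2_of_covBy {f : Fin n → α} (hf : Injective f) {p q r s : Fin n}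
    (hpq : p < q) (hqr : q ≤ r) (hrs : r < s) (hsp : f s ⋖ f p) (hq : f q < f p)
    (hr : f s < f r) : Contains3_14_2 f := by
  obtain ⟨t, t', ht', hqt, htr, hft, hft'⟩ :=
    Fin.exists_flip_of_le (P := fun x => f x < f p) hqr hq (hsp.ge_of_gt hr).not_gt
  have htt' : t < t' := Fin.lt_def.2 (by omega)
  have hts : t < s := htt'.trans_le htr |>.trans hrs
  refine ⟨p, t, t', s, hpq.trans_le hqt, hts, ht', ?_, hsp.lt, ?_⟩
  · exact (hsp.le_of_lt hft).lt_of_ne (hf.ne hts.ne)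
  · exact (not_lt.1 hft').lt_of_ne (hf.ne (hpq.trans_le (hqt.trans htt'.le)).ne)

theorem contains3_14_2_toDual_of_inv {σ : Equiv.Perm (Fin n)} (h : Contains3_14_2 ⇑σ⁻¹) :
    Contains3_14_2 (toDual ∘ σ) := by
  obtain ⟨a, b, b', c, hab, hbc, hb', hσbc, hσca, hσab'⟩ := h
  have hcov : b ⋖ b' := Fin.covBy_iff.2 (Nat.covBy_iff_add_one_eq.2 hb'.symm)
  refine contains3_14_2_of_covBy (toDual.injective.comp σ.injective) hσbc hσca.le hσab' ?_ ?_ ?_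
  all_goals simp only [comp_apply, Equiv.Perm.coe_inv, Equiv.apply_symm_apply, toDual_lt_toDual,
    toDual_covBy_toDual_iff]
  exacts [hcov, hbc, hab.trans hcov.lt]

theorem contains3_14_2_of_toDual_inv {σ : Equiv.Perm (Fin n)}
    (h : Contains3_14_2 (toDual ∘ ⇑σ⁻¹)) : Contains3_14_2 σ := by
  obtain ⟨a, b, b', c, hab, hbc, hb', hσbc, hσca, hσab'⟩ := h
  have hcov : b ⋖ b' := Fin.covBy_iff.2 (Nat.covBy_iff_add_one_eq.2 hb'.symm)
  simp only [comp_apply, toDual_lt_toDual] at hσbc hσca hσab'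
  refine contains3_14_2_of_covBy σ.injective hσab' hσca.le hσbc ?_ ?_ ?_
  all_goals simp only [Equiv.Perm.coe_inv, Equiv.apply_symm_apply]
  exacts [hcov, hab.trans hcov.lt, hbc]

theorem IsBaxter.inv {σ : Equiv.Perm (Fin n)} (h : IsBaxter σ) : IsBaxter σ⁻¹ := by
  rw [isBaxter_iff] at h ⊢
  exact ⟨fun h' => h.2 (contains3_14_2_toDual_of_inv h'),
    fun h' => h.1 (contains3_14_2_of_toDual_inv h')⟩

/-- A permutation is Baxter if and only if its inverse is Baxter. -/
theorem isBaxter_inv_iff {n : ℕ} (σ : Equiv.Perm (Fin n)) :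
    IsBaxter σ ↔ IsBaxter σ⁻¹ :=
  ⟨IsBaxter.inv, fun h => inv_inv σ ▸ h.inv⟩
end

section
/- The family of walks {Z^{(t)}}_{t∈I} associated with a plane walk W with increments in A is a coalescent-walk process: for all t ≤ t' in I, the monotone coupling property holds, i.e., if Z^{(t)}_k ≥ Z^{(t')}_k at some time k then Z^{(t)}_{k'} ≥ Z^{(t')}_{k'} for all k' ≥ k. -/
/-!
All walks `Z^{(t)}` alive at time `k - 1` are updated by the same map of `Z_{k-1}`, which depends
only on the increment `W_k - W_{k-1}`. For increments in `A` this map is monotone, so an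
inequality between two walks propagates forward by induction.
-/

/-- The set A of admissible increments: (+1,-1) together with (-i,+j) for i,j ≥ 0. -/
def AdmissibleSteps : Set (ℤ × ℤ) :=
  {((1 : ℤ), (-1 : ℤ))} ∪ {p : ℤ × ℤ | p.1 ≤ 0 ∧ 0 ≤ p.2}

/-- The coalescent recursion `z ↦ Z_k` driven by the increment `d = (ΔX, ΔY)`. -/
def coalescentStep (d : ℤ × ℤ) (z : ℤ) : ℤ :=
  if 0 ≤ z then z + d.2 else if z - d.1 < 0 then z - d.1 else d.2

theorem coalescentStep_eq_of_cases {d : ℤ × ℤ} {z z' : ℤ}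
    (hnonneg : 0 ≤ z → z' = z + d.2)
    (hneg : z < 0 → z - d.1 < 0 → z' = z - d.1)
    (hjump : z < 0 → 0 ≤ z - d.1 → z' = d.2) :
    coalescentStep d z = z' := by
  unfold coalescentStep
  split_ifs with h₁ h₂
  · exact (hnonneg h₁).symm
  · exact (hneg (not_le.mp h₁) h₂).symm
  · exact (hjump (not_le.mp h₁) (not_lt.mp h₂)).symm

/- On `(1, -1)` the step is `z ↦ z - 1`; on `(-i, j)` both pieces are increasing and the
jump at `z - d.1 = 0` goes up, from a negative value to `j ≥ 0`. -/
theorem coalescentStep_monotone {d : ℤ × ℤ} (hd : d ∈ AdmissibleSteps) :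
    Monotone (coalescentStep d) := by
  intro a b hab
  rcases hd with hd | ⟨hdx, hdy⟩
  · obtain rfl := Set.mem_singleton_iff.mp hd
    unfold coalescentStep
    split_ifs <;> omega
  · unfold coalescentStep
    split_ifs <;> omega

theorem le_of_monotone_recursion {α : Type*} [Preorder α] {I : Set ℤ} (hI : I.OrdConnected)
    {f : ℤ → α → α} {a b : ℤ → α} {k : ℤ} (hk : k ∈ I)
    (hf : ∀ n ∈ I, k < n → Monotone (f n))
    (ha : ∀ n ∈ I, k < n → a n = f n (a (n - 1)))
    (hb : ∀ n ∈ I, k < n → b n = f n (b (n - 1)))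
    (hab : a k ≤ b k) :
    ∀ k' ∈ I, k ≤ k' → a k' ≤ b k' := by
  intro k' hk' hkk'
  induction k', hkk' using Int.leInduction with
  | base => exact hab
  | succ n hkn ih =>
    have hn : n ∈ I := hI.out hk hk' ⟨hkn, by omega⟩
    rw [ha _ hk' (by omega), hb _ hk' (by omega), add_sub_cancel_right]
    exact hf _ hk' (by omega) (ih hn)

theorem wcp_is_coalescent_general
    (I : Set ℤ) (hI : I.OrdConnected) (X Y : ℤ → ℤ)
    (hinc : ∀ k ∈ I, (k - 1) ∈ I → (X k - X (k - 1), Y k - Y (k - 1)) ∈ AdmissibleSteps)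
    (Z : ℤ → ℤ → ℤ)
    (hrec : ∀ t ∈ I, ∀ k ∈ I, t < k →
      (0 ≤ Z t (k - 1) → Z t k = Z t (k - 1) + (Y k - Y (k - 1))) ∧
      (Z t (k - 1) < 0 → Z t (k - 1) - (X k - X (k - 1)) < 0 →
        Z t k = Z t (k - 1) - (X k - X (k - 1))) ∧
      (Z t (k - 1) < 0 → 0 ≤ Z t (k - 1) - (X k - X (k - 1)) →
        Z t k = Y k - Y (k - 1)))
    (t : ℤ) (ht : t ∈ I) (t' : ℤ) (ht' : t' ∈ I) (htt' : t ≤ t')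
    (k : ℤ) (hk : k ∈ I) (hkt : t' ≤ k) (hcmp : Z t' k ≤ Z t k) :
    ∀ k' ∈ I, k ≤ k' → Z t' k' ≤ Z t k' := by
  let step (n : ℤ) := coalescentStep (X n - X (n - 1), Y n - Y (n - 1))
  have hZ : ∀ s ∈ I, ∀ n ∈ I, s < n → Z s n = step n (Z s (n - 1)) := fun s hs n hn hsn =>
    have ⟨hnonneg, hneg, hjump⟩ := hrec s hs n hn hsn
    (coalescentStep_eq_of_cases hnonneg hneg hjump).symm
  refine le_of_monotone_recursion hI hk (f := step) ?_ ?_ ?_ hcmp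
  · exact fun n hn hkn => coalescentStep_monotone (hinc n hn (hI.out hk hn ⟨by omega, by omega⟩))
  · exact fun n hn hkn => hZ t' ht' n hn (by omega)
  · exact fun n hn hkn => hZ t ht n hn (by omega)

/-- The family of walks associated with a plane walk W = (X,Y) with increments in A
(via the coalescent recursion) is a coalescent-walk process: the order between two
trajectories, once established, is preserved at all later times. -/
theorem wcp_is_coalescent
    (I : Set ℤ) (hI : I.OrdConnected) (X Y : ℤ → ℤ)
    (hinc : ∀ k ∈ I, (k - 1) ∈ I → (X k - X (k - 1), Y k - Y (k - 1)) ∈ AdmissibleSteps)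
    (Z : ℤ → ℤ → ℤ)
    (hstart : ∀ t ∈ I, Z t t = 0)
    (hrec : ∀ t ∈ I, ∀ k ∈ I, t < k →
      (0 ≤ Z t (k - 1) → Z t k = Z t (k - 1) + (Y k - Y (k - 1))) ∧
      (Z t (k - 1) < 0 → Z t (k - 1) - (X k - X (k - 1)) < 0 →
        Z t k = Z t (k - 1) - (X k - X (k - 1))) ∧
      (Z t (k - 1) < 0 → 0 ≤ Z t (k - 1) - (X k - X (k - 1)) →
        Z t k = Y k - Y (k - 1)))
    (t : ℤ) (ht : t ∈ I) (t' : ℤ) (ht' : t' ∈ I) (htt' : t ≤ t')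
    (k : ℤ) (hk : k ∈ I) (hkt : t' ≤ k) (hcmp : Z t' k ≤ Z t k) :
    ∀ k' ∈ I, k ≤ k' → Z t' k' ≤ Z t k' :=
  wcp_is_coalescent_general I hI X Y hinc Z hrec t ht t' ht' htt' k hk hkt hcmp
end

section
/- Given a coalescent-walk process Z = {Z^{(t)}}_{t∈I} over an interval I of ℤ, the relation i ≤_Z j defined by: i ≤_Z j iff (i < j and Z^{(i)}_j < 0) or (j < i and Z^{(j)}_i ≥ 0) or (i = j), is a total order on I. -/
/-!
For `i < j`, `i ≤_Z j` says that the walk started at `i` is strictly below `0 = Z^{(j)}_j` at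
time `j`. Reflexivity, antisymmetry and totality are immediate from the definition; for
transitivity it suffices, by totality, to rule out strict cycles `a <_Z b <_Z c <_Z a`. Rotating
the cycle we may assume `a` is the smallest of the three times, which leaves two cases. Both are
excluded by the one consequence of coalescence: for `a ≤ b ≤ c`, the sign of `Z^{(a)}_b` decides
whether the walk from `a` stays below or above the walk from `b` at time `c`.
-/

/-- The order relation associated with a coalescent-walk process Z:
i ≤_Z j iff (i < j and Z i j < 0) or (j < i and Z j i ≥ 0) or i = j. -/
def coalOrder (Z : ℤ → ℤ → ℤ) (i j : ℤ) : Prop :=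
  (i < j ∧ Z i j < 0) ∨ (j < i ∧ 0 ≤ Z j i) ∨ i = j

structure IsCoalescentWalkProcess (I : Set ℤ) (Z : ℤ → ℤ → ℤ) : Prop where
  start : ∀ t ∈ I, Z t t = 0
  mono : ∀ t ∈ I, ∀ t' ∈ I, ∀ k ∈ I, max t t' ≤ k → Z t' k ≤ Z t k →
    ∀ k' ∈ I, k ≤ k' → Z t' k' ≤ Z t k'

namespace IsCoalescentWalkProcess

variable {I : Set ℤ} {Z : ℤ → ℤ → ℤ} {a b c : ℤ}

theorem le_of_nonpos (hZ : IsCoalescentWalkProcess I Z) (ha : a ∈ I) (hb : b ∈ I) (hc : c ∈ I)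
    (hab : a ≤ b) (hbc : b ≤ c) (h : Z a b ≤ 0) : Z a c ≤ Z b c :=
  hZ.mono b hb a ha b hb (max_le le_rfl hab) (hZ.start b hb ▸ h) c hc hbc

theorem le_of_nonneg (hZ : IsCoalescentWalkProcess I Z) (ha : a ∈ I) (hb : b ∈ I) (hc : c ∈ I)
    (hab : a ≤ b) (hbc : b ≤ c) (h : 0 ≤ Z a b) : Z b c ≤ Z a c :=
  hZ.mono a ha b hb b hb (max_le hab le_rfl) (hZ.start b hb ▸ h) c hc hbc

end IsCoalescentWalkProcess

section

variable {I : Set ℤ} {Z : ℤ → ℤ → ℤ} {i j k a b c : ℤ}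

theorem coalOrder_refl (Z : ℤ → ℤ → ℤ) (i : ℤ) : coalOrder Z i i :=
  Or.inr (Or.inr rfl)

theorem coalOrder_antisymm (hij : coalOrder Z i j) (hji : coalOrder Z j i) : i = j := by
  unfold coalOrder at hij hji
  omega

theorem coalOrder_total (Z : ℤ → ℤ → ℤ) (i j : ℤ) : coalOrder Z i j ∨ coalOrder Z j i := by
  unfold coalOrder
  omega

theorem coalOrder_iff_of_lt (h : i < j) : coalOrder Z i j ↔ Z i j < 0 := by
  unfold coalOrder
  omega

theorem coalOrder_iff_of_gt (h : j < i) : coalOrder Z i j ↔ 0 ≤ Z j i := by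
  unfold coalOrder
  omega

theorem not_coalOrder_cycle_of_lt_of_lt (hZ : IsCoalescentWalkProcess I Z)
    (ha : a ∈ I) (hb : b ∈ I) (hc : c ∈ I) (hab : a < b) (hac : a < c) (hbc : b ≠ c) :
    ¬ (coalOrder Z a b ∧ coalOrder Z b c ∧ coalOrder Z c a) := by
  rintro ⟨h₁, h₂, h₃⟩
  rw [coalOrder_iff_of_lt hab] at h₁
  rw [coalOrder_iff_of_gt hac] at h₃
  rcases hbc.lt_or_gt with hbc | hcb
  · rw [coalOrder_iff_of_lt hbc] at h₂
    have := hZ.le_of_nonpos ha hb hc hab.le hbc.le h₁.le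
    omega
  · rw [coalOrder_iff_of_gt hcb] at h₂
    have := hZ.le_of_nonneg ha hc hb hac.le hcb.le h₃
    omega

theorem not_coalOrder_cycle (hZ : IsCoalescentWalkProcess I Z)
    (ha : a ∈ I) (hb : b ∈ I) (hc : c ∈ I) (hab : a ≠ b) (hbc : b ≠ c) (hca : c ≠ a) :
    ¬ (coalOrder Z a b ∧ coalOrder Z b c ∧ coalOrder Z c a) := by
  obtain ⟨hab', hac'⟩ | ⟨hbc', hba'⟩ | ⟨hca', hcb'⟩ :
      (a < b ∧ a < c) ∨ (b < c ∧ b < a) ∨ (c < a ∧ c < b) := by omega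
  · exact not_coalOrder_cycle_of_lt_of_lt hZ ha hb hc hab' hac' hbc
  · exact fun ⟨h₁, h₂, h₃⟩ =>
      not_coalOrder_cycle_of_lt_of_lt hZ hb hc ha hbc' hba' hca ⟨h₂, h₃, h₁⟩
  · exact fun ⟨h₁, h₂, h₃⟩ =>
      not_coalOrder_cycle_of_lt_of_lt hZ hc ha hb hca' hcb' hab ⟨h₃, h₁, h₂⟩

theorem coalOrder_trans (hZ : IsCoalescentWalkProcess I Z) (hi : i ∈ I) (hj : j ∈ I)
    (hk : k ∈ I) (hij : coalOrder Z i j) (hjk : coalOrder Z j k) : coalOrder Z i k := by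
  rcases eq_or_ne i j with rfl | hij'
  · exact hjk
  rcases eq_or_ne j k with rfl | hjk'
  · exact hij
  rcases eq_or_ne k i with rfl | hki'
  · exact coalOrder_refl Z k
  exact (coalOrder_total Z i k).resolve_right fun hki =>
    not_coalOrder_cycle hZ hi hj hk hij' hjk' hki' ⟨hij, hjk, hki⟩

end

theorem coalOrder_isTotalOrder_general
    (I : Set ℤ) (Z : ℤ → ℤ → ℤ)
    (hstart : ∀ t ∈ I, Z t t = 0)
    (hmono : ∀ t ∈ I, ∀ t' ∈ I, ∀ k ∈ I, max t t' ≤ k → Z t' k ≤ Z t k →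
      ∀ k' ∈ I, k ≤ k' → Z t' k' ≤ Z t k') :
    (∀ i ∈ I, coalOrder Z i i) ∧
    (∀ i ∈ I, ∀ j ∈ I, coalOrder Z i j → coalOrder Z j i → i = j) ∧
    (∀ i ∈ I, ∀ j ∈ I, ∀ k ∈ I, coalOrder Z i j → coalOrder Z j k → coalOrder Z i k) ∧
    (∀ i ∈ I, ∀ j ∈ I, coalOrder Z i j ∨ coalOrder Z j i) :=
  ⟨fun i _ => coalOrder_refl Z i,
    fun _ _ _ _ => coalOrder_antisymm,
    fun _ hi _ hj _ hk => coalOrder_trans ⟨hstart, hmono⟩ hi hj hk,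
    fun i _ j _ => coalOrder_total Z i j⟩

/-- For a coalescent-walk process Z over an interval I of ℤ, the relation ≤_Z is a
total order on I: reflexive, antisymmetric, transitive and total. -/
theorem coalOrder_isTotalOrder
    (I : Set ℤ) (hI : I.OrdConnected) (Z : ℤ → ℤ → ℤ)
    (hstart : ∀ t ∈ I, Z t t = 0)
    (hmono : ∀ t ∈ I, ∀ t' ∈ I, ∀ k ∈ I, max t t' ≤ k → Z t' k ≤ Z t k →
      ∀ k' ∈ I, k ≤ k' → Z t' k' ≤ Z t k') :
    (∀ i ∈ I, coalOrder Z i i) ∧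
    (∀ i ∈ I, ∀ j ∈ I, coalOrder Z i j → coalOrder Z j i → i = j) ∧
    (∀ i ∈ I, ∀ j ∈ I, ∀ k ∈ I, coalOrder Z i j → coalOrder Z j k → coalOrder Z i k) ∧
    (∀ i ∈ I, ∀ j ∈ I, coalOrder Z i j ∨ coalOrder Z j i) :=
  coalOrder_isTotalOrder_general I Z hstart hmono
end

section
/- Let (X,Y) be distributed according to ν. Then the covariance of X and Y equals -1, so (since Var(X) = Var(Y) = 2) the correlation of X and Y is -1/2. -/
/-! Writing the mass `2^{-i-j-3}` as `2⁻³ · (i 2^{-i}) · (j 2^{-j})` factors the off-atom part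
of `E[XY]` into `-2⁻³ (∑ n 2^{-n})² = -2⁻³ · 2² = -1/2`; the atom at `(1,-1)` contributes
another `-1/2`. -/

theorem tsum_prod_natCast_mul_geometric {𝕜 : Type*} [NormedField 𝕜] [CompleteSpace 𝕜] {r : 𝕜}
    (hr : ‖r‖ < 1) :
    ∑' p : ℕ × ℕ, ((p.1 : 𝕜) * r ^ p.1) * ((p.2 : 𝕜) * r ^ p.2) = (r / (1 - r) ^ 2) ^ 2 := by
  have hsum : Summable fun n : ℕ => ‖(n : 𝕜) * r ^ n‖ := by
    simpa using summable_norm_pow_mul_geometric_of_norm_lt_one 1 hr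
  rw [← tsum_mul_tsum_of_summable_norm hsum hsum, tsum_coe_mul_geometric_of_norm_lt_one hr, ← sq]

theorem zpow_neg_natCast_sub_natCast_sub {K : Type*} [Field K] {a : K} (ha : a ≠ 0) (i j k : ℕ) :
    a ^ (-(i : ℤ) - j - k) = (a ^ k)⁻¹ * (a⁻¹ ^ i * a⁻¹ ^ j) := by
  rw [sub_eq_add_neg, sub_eq_add_neg, zpow_add₀ ha, zpow_add₀ ha, zpow_neg, zpow_neg, zpow_neg,
    zpow_natCast, zpow_natCast, zpow_natCast, inv_pow, inv_pow]
  ring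

/-- For (X,Y) distributed according to ν (mass 1/2 at (1,-1), mass 2^{-i-j-3} at (-i,j)),
since E[X] = E[Y] = 0, the covariance of X and Y is E[XY] = -1; and since
Var(X) = Var(Y) = 2, the correlation is -1/(√2·√2) = -1/2. -/
theorem nu_covariance :
    (1 / 2 : ℝ) * (1 * (-1)) +
      ∑' p : ℕ × ℕ, (2 : ℝ) ^ (-(p.1 : ℤ) - (p.2 : ℤ) - 3) * ((-(p.1 : ℝ)) * (p.2 : ℝ))
      = -1 ∧
    (-1 : ℝ) / (Real.sqrt 2 * Real.sqrt 2) = -1 / 2 := by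
  have hhalf : ‖(2⁻¹ : ℝ)‖ < 1 := by norm_num
  have hoff : ∑' p : ℕ × ℕ, (2 : ℝ) ^ (-(p.1 : ℤ) - (p.2 : ℤ) - 3) * ((-(p.1 : ℝ)) * (p.2 : ℝ))
      = -1 / 2 :=
    calc _ = ∑' p : ℕ × ℕ, -8⁻¹ * (((p.1 : ℝ) * 2⁻¹ ^ p.1) * ((p.2 : ℝ) * 2⁻¹ ^ p.2)) := by
          refine tsum_congr fun p => ?_
          rw [show (3 : ℤ) = (3 : ℕ) from rfl, zpow_neg_natCast_sub_natCast_sub two_ne_zero]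
          ring
      _ = -1 / 2 := by
          rw [tsum_mul_left, tsum_prod_natCast_mul_geometric hhalf]
          norm_num
  refine ⟨by rw [hoff]; norm_num, ?_⟩
  rw [Real.mul_self_sqrt zero_le_two]
end

section
/- If W̄ is a random walk with i.i.d. ν-distributed increments started at (0,0), then conditionally on the event {(W̄_t)_{0≤t≤n+1} ∈ 𝔚^{A,exc}_{n+2}}, the law of (W̄_t)_{0≤t≤n+1} is uniform on 𝔚^{A,exc}_{n+2}. -/
open MeasureTheory

/-- The step distribution ν on ℤ²: mass 1/2 at (1,-1) and mass 2^{-i-j-3} at (-i,j). -/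
noncomputable def nuStep : Measure (ℤ × ℤ) :=
  (2⁻¹ : ENNReal) • Measure.dirac ((1, -1) : ℤ × ℤ) +
    Measure.sum (fun p : ℕ × ℕ =>
      ((2⁻¹ : ENNReal) ^ (p.1 + p.2 + 3)) • Measure.dirac ((-(p.1 : ℤ), (p.2 : ℤ)) : ℤ × ℤ))

/-- 𝔚^{A,exc}_{n+2}: walks (W_0,…,W_{n+1}) in the non-negative quadrant, starting and
ending at (0,0), with increments in A. -/
def WExc (n : ℕ) : Set (Fin (n + 2) → ℤ × ℤ) :=
  {W | W 0 = (0, 0) ∧ W (Fin.last (n + 1)) = (0, 0) ∧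
    (∀ t, 0 ≤ (W t).1 ∧ 0 ≤ (W t).2) ∧
    (∀ t : Fin (n + 1), W t.succ - W t.castSucc ∈ AdmissibleSteps)}

/-!
For a step `d ∈ A` one has `ν {d} = 2⁻¹ ^ (3 + d.2 - d.1)`. Along a walk from `(0,0)` back to
`(0,0)` the increments telescope, so the exponents of the `n + 1` steps always sum to
`3 (n + 1)`: every excursion has the same probability `2⁻¹ ^ (3 (n + 1))`, and conditioning on
the (positive-probability) event of being an excursion makes the law uniform.
-/

theorem Fin.sum_succ_sub_castSucc {G : Type*} [AddCommGroup G] :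
    ∀ {n : ℕ} (f : Fin (n + 1) → G), ∑ i : Fin n, (f i.succ - f i.castSucc) = f (Fin.last n) - f 0
  | 0, _ => by simp
  | n + 1, f => by
    rw [Fin.sum_univ_castSucc, ← Fin.succ_last]
    simp only [Fin.succ_castSucc]
    rw [Fin.sum_succ_sub_castSucc (fun i => f i.castSucc)]
    simp

theorem measurableSet_comap_path {Ω G : Type*} [MeasurableSpace G] [MeasurableSingletonClass G]
    (W : ℕ → Ω → G) (k : ℕ) (u : Fin (k + 1) → G) :
    MeasurableSet[MeasurableSpace.comap (fun ω => fun i : Fin (k + 1) => W i ω) inferInstance]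
      {ω | ∀ t : Fin (k + 1), W t ω = u t} := by
  convert comap_measurable _ (measurableSet_singleton u) using 1
  ext ω
  simp [funext_iff]

section RandomWalk

variable {Ω G : Type*} [MeasurableSpace Ω] [AddGroup G] [MeasurableSpace G]

/-- The increment `W (k + 1) - W k` is independent of `(W 0, …, W k)` and has law `μ`. -/
def HasIndepStepsWithLaw (ℙ : Measure Ω) (W : ℕ → Ω → G) (μ : Measure G) : Prop :=
  ∀ k : ℕ, ∀ B : Set Ω,
    MeasurableSet[MeasurableSpace.comap (fun ω => fun i : Fin (k + 1) => W i ω) inferInstance] B →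
    ∀ s : Set G, ℙ (B ∩ {ω | W (k + 1) ω - W k ω ∈ s}) = ℙ B * μ s

variable [MeasurableSingletonClass G] {ℙ : Measure Ω} {W : ℕ → Ω → G} {μ : Measure G}

theorem HasIndepStepsWithLaw.measure_path_eq_prod [IsProbabilityMeasure ℙ]
    (hW : HasIndepStepsWithLaw ℙ W μ) :
    ∀ (k : ℕ) (u : Fin (k + 1) → G), (∀ ω, W 0 ω = u 0) →
      ℙ {ω | ∀ t : Fin (k + 1), W t ω = u t} = ∏ t : Fin k, μ {u t.succ - u t.castSucc}
  | 0, u, hW0 => by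
    have hpath : {ω | ∀ t : Fin 1, W t ω = u t} = Set.univ := by
      ext ω
      simpa [Fin.forall_fin_one] using hW0 ω
    rw [hpath]
    simp
  | k + 1, u, hW0 => by
    have hpath : {ω | ∀ t : Fin (k + 2), W t ω = u t} =
        {ω | ∀ t : Fin (k + 1), W t ω = u t.castSucc} ∩
          {ω | W (k + 1) ω - W k ω ∈ ({u (Fin.last _) - u (Fin.last k).castSucc} : Set G)} := by
      ext ω
      simp only [Set.mem_inter_iff, Set.mem_ofPred_eq, Set.mem_singleton_iff]
      rw [Fin.forall_fin_succ']
      refine and_congr_right fun hprefix => ?_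
      have hk : W k ω = u (Fin.last k).castSucc := hprefix (Fin.last k)
      rw [hk, sub_left_inj]
      rfl
    rw [hpath, hW k _ (measurableSet_comap_path W k _),
      hW.measure_path_eq_prod k (fun t => u t.castSucc) (by simpa using hW0),
      Fin.prod_univ_castSucc]
    simp [Fin.succ_last]

end RandomWalk

theorem nuStep_singleton_one : nuStep {((1 : ℤ), (-1 : ℤ))} = 2⁻¹ := by
  rw [nuStep, Measure.add_apply, Measure.smul_apply,
    Measure.sum_apply _ (measurableSet_singleton _)]
  have hneg : ∀ p : ℕ × ℕ, Measure.dirac ((-(p.1 : ℤ), (p.2 : ℤ)) : ℤ × ℤ) {(1, -1)} = 0 := by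
    intro p
    rw [Measure.dirac_apply' _ (measurableSet_singleton _), Set.indicator_of_notMem]
    simp only [Set.mem_singleton_iff, Prod.mk.injEq, not_and]
    omega
  simp [hneg]

theorem nuStep_singleton_neg (i j : ℕ) : nuStep {(-(i : ℤ), (j : ℤ))} = 2⁻¹ ^ (i + j + 3) := by
  rw [nuStep, Measure.add_apply, Measure.smul_apply,
    Measure.sum_apply _ (measurableSet_singleton _), tsum_eq_single (i, j)]
  · have hone : Measure.dirac ((1, -1) : ℤ × ℤ) {(-(i : ℤ), (j : ℤ))} = 0 := by
      rw [Measure.dirac_apply' _ (measurableSet_singleton _), Set.indicator_of_notMem]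
      simp only [Set.mem_singleton_iff, Prod.mk.injEq, not_and]
      omega
    simp [hone]
  · intro p hp
    rw [Measure.smul_apply, Measure.dirac_apply' _ (measurableSet_singleton _),
      Set.indicator_of_notMem, smul_zero]
    simp only [Set.mem_singleton_iff, Prod.mk.injEq, neg_inj, Nat.cast_inj]
    exact fun h => hp (Prod.ext h.1 h.2)

theorem AdmissibleSteps.three_add_snd_sub_fst_nonneg {d : ℤ × ℤ} (hd : d ∈ AdmissibleSteps) :
    0 ≤ 3 + d.2 - d.1 := by
  rcases hd with rfl | ⟨h1, h2⟩
  · norm_num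
  · omega

theorem nuStep_singleton_of_mem_admissibleSteps {d : ℤ × ℤ} (hd : d ∈ AdmissibleSteps) :
    nuStep {d} = 2⁻¹ ^ (3 + d.2 - d.1).toNat := by
  rcases hd with rfl | ⟨h1, h2⟩
  · rw [nuStep_singleton_one]
    norm_num
  · obtain ⟨a, b⟩ := d
    obtain ⟨i, rfl⟩ := Int.exists_eq_neg_ofNat h1
    obtain ⟨j, rfl⟩ := Int.eq_ofNat_of_zero_le h2
    rw [nuStep_singleton_neg]
    congr 1
    omega

theorem prod_nuStep_increments_of_mem_wExc {n : ℕ} {w : Fin (n + 2) → ℤ × ℤ} (hw : w ∈ WExc n) :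
    ∏ t : Fin (n + 1), nuStep {w t.succ - w t.castSucc} = 2⁻¹ ^ (3 * (n + 1)) := by
  obtain ⟨hw0, hwlast, -, hsteps⟩ := hw
  rw [Finset.prod_congr rfl fun t _ => nuStep_singleton_of_mem_admissibleSteps (hsteps t),
    Finset.prod_pow_eq_pow_sum]
  congr 1
  have htel := Fin.sum_succ_sub_castSucc w
  rw [hw0, hwlast, sub_self] at htel
  have hfst : ∑ t : Fin (n + 1), (w t.succ - w t.castSucc).1 = 0 := by
    rw [← Prod.fst_sum, htel]; rfl
  have hsnd : ∑ t : Fin (n + 1), (w t.succ - w t.castSucc).2 = 0 := by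
    rw [← Prod.snd_sum, htel]; rfl
  zify
  rw [Finset.sum_congr rfl fun t _ =>
      Int.toNat_of_nonneg (AdmissibleSteps.three_add_snd_sub_fst_nonneg (hsteps t)),
    Finset.sum_sub_distrib, Finset.sum_add_distrib, hfst, hsnd]
  simp [mul_comm]

/-- If W is a random walk started at (0,0) with i.i.d. ν-distributed increments, then
conditionally on the event that (W_0,…,W_{n+1}) ∈ 𝔚^{A,exc}_{n+2}, the law of
(W_0,…,W_{n+1}) is the uniform distribution on 𝔚^{A,exc}_{n+2}: the conditional
measure gives the same probability to every walk of 𝔚^{A,exc}_{n+2} and is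
concentrated on 𝔚^{A,exc}_{n+2}. -/
theorem conditioned_walk_uniform
    {Ω : Type*} [MeasurableSpace Ω] (ℙ : Measure Ω) [IsProbabilityMeasure ℙ]
    (W : ℕ → Ω → ℤ × ℤ)
    (hW0 : ∀ ω, W 0 ω = (0, 0))
    (hWstep : ∀ k : ℕ, ∀ B : Set Ω,
      MeasurableSet[MeasurableSpace.comap (fun ω => fun i : Fin (k + 1) => W i ω)
        inferInstance] B →
      ∀ s : Set (ℤ × ℤ),
        ℙ (B ∩ {ω | W (k + 1) ω - W k ω ∈ s}) = ℙ B * nuStep s)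
    (n : ℕ)
    (E : Set Ω) (hE : E = {ω | (fun t : Fin (n + 2) => W t ω) ∈ WExc n})
    (hEpos : 0 < ℙ E) :
    (∀ w ∈ WExc n, ∀ w' ∈ WExc n,
      ProbabilityTheory.cond ℙ E {ω | ∀ t : Fin (n + 2), W t ω = w t} =
        ProbabilityTheory.cond ℙ E {ω | ∀ t : Fin (n + 2), W t ω = w' t}) ∧
    ProbabilityTheory.cond ℙ E {ω | (fun t : Fin (n + 2) => W t ω) ∈ WExc n} = 1 := by
  have hpath : ∀ w ∈ WExc n, ℙ {ω | ∀ t : Fin (n + 2), W t ω = w t} = 2⁻¹ ^ (3 * (n + 1)) :=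
    fun w hw => by
      rw [HasIndepStepsWithLaw.measure_path_eq_prod hWstep (n + 1) w
        (fun ω => (hW0 ω).trans hw.1.symm)]
      exact prod_nuStep_increments_of_mem_wExc hw
  have hcond : ∀ w ∈ WExc n, ProbabilityTheory.cond ℙ E {ω | ∀ t : Fin (n + 2), W t ω = w t} =
      (ℙ E)⁻¹ * 2⁻¹ ^ (3 * (n + 1)) := fun w hw => by
    have hsub : {ω | ∀ t : Fin (n + 2), W t ω = w t} ⊆ E := fun ω hω => by
      rw [hE, Set.mem_ofPred_eq, funext hω]
      exact hw
    rw [ProbabilityTheory.cond, Measure.smul_apply, smul_eq_mul, Measure.restrict_eq_self ℙ hsub,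
      hpath w hw]
  refine ⟨fun w hw w' hw' => by rw [hcond w hw, hcond w' hw'], ?_⟩
  rw [← hE]
  exact ProbabilityTheory.cond_apply_self hEpos.ne' (measure_ne_top ℙ E)
end
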